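/- arXiv:2504.19761 — 4 statements merged into one kernel-verified Lean document; each statement's English description precedes it below -/
import Mathlib

section
/- Define φ(l) = 1 - l/(2·N(c,l)) - (N(c,l)-1)·c/2 whenever N(c,l) ≥ 1. Then φ is weakly decreasing in l: if 0 < l₁ ≤ l₂ ≤ 1, N(c,l₁) ≥ 1 and N(c,l₂) ≥ 1, then φ(l₂) ≤ φ(l₁). -/
/-- The case predicate defining the function `N(c,l)` of the paper. -/
def Ncase (c l : ℝ) (n : ℕ) : Prop :=
  if n = 0 then 1 - l / 2 < c
  else if n = 1 then l / 2 < c ∧ c ≤ 1 - l / 2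
  else l / ((n : ℝ) * ((n : ℝ) + 1)) < c ∧ c ≤ l / ((n : ℝ) * ((n : ℝ) - 1))

/-- The threshold `φ(l) = 1 - l/(2 N(c,l)) - (N(c,l)-1) c / 2`, written with
the value `n = N(c,l)` made explicit. -/
noncomputable def phi (c l : ℝ) (n : ℕ) : ℝ :=
  1 - l / (2 * (n : ℝ)) - ((n : ℝ) - 1) * c / 2

lemma Ncase_bounds (c l : ℝ) (n : ℕ) (hn : 1 ≤ n) (hl : 0 < l) (h : Ncase c l n) :
    c * ((n : ℝ) * ((n : ℝ) - 1)) ≤ l ∧ l < c * ((n : ℝ) * ((n : ℝ) + 1)) := by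
  unfold Ncase at h
  rcases Nat.lt_or_ge n 2 with h2 | h2
  · interval_cases n
    · simp at h
      constructor
      · simp; linarith
      · push_cast; linarith [h.1]
  · have hn0 : n ≠ 0 := by omega
    have hn1 : n ≠ 1 := by omega
    rw [if_neg hn0, if_neg hn1] at h
    have hb : (2 : ℝ) ≤ (n : ℝ) := by exact_mod_cast h2
    have hp1 : (0 : ℝ) < (n : ℝ) * ((n : ℝ) + 1) := by nlinarith
    have hp2 : (0 : ℝ) < (n : ℝ) * ((n : ℝ) - 1) := by nlinarith
    constructor
    · exact (le_div_iff₀ hp2).mp h.2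
    · have := (div_lt_iff₀ hp1).mp h.1
      linarith

/-- `φ` is weakly decreasing in the window length `l`:
if `0 < l₁ ≤ l₂ ≤ 1` and `N(c,l₁), N(c,l₂) ≥ 1`, then `φ(l₂) ≤ φ(l₁)`. -/
theorem phi_antitone (c l₁ l₂ : ℝ) (n₁ n₂ : ℕ)
    (hc0 : 0 < c) (hc1 : c ≤ 1)
    (hl₁ : 0 < l₁) (hl : l₁ ≤ l₂) (hl₂ : l₂ ≤ 1)
    (h₁ : Ncase c l₁ n₁) (h₂ : Ncase c l₂ n₂)
    (hn₁ : 1 ≤ n₁) (hn₂ : 1 ≤ n₂) :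
    phi c l₂ n₂ ≤ phi c l₁ n₁ := by
  obtain ⟨lo₁, hi₁⟩ := Ncase_bounds c l₁ n₁ hn₁ hl₁ h₁
  obtain ⟨lo₂, hi₂⟩ := Ncase_bounds c l₂ n₂ hn₂ (lt_of_lt_of_le hl₁ hl) h₂
  set a : ℝ := (n₁ : ℝ) with ha
  set b : ℝ := (n₂ : ℝ) with hb
  have ha1 : (1 : ℝ) ≤ a := by rw [ha]; exact_mod_cast hn₁
  have hb1 : (1 : ℝ) ≤ b := by rw [hb]; exact_mod_cast hn₂
  have ha0 : (0 : ℝ) < a := by linarith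
  have hb0 : (0 : ℝ) < b := by linarith
  unfold phi
  rcases lt_trichotomy n₁ n₂ with hlt | heq | hgt
  · have hab : a + 1 ≤ b := by
      rw [ha, hb]; push_cast; exact_mod_cast Nat.succ_le_of_lt hlt
    have k1 : l₁ / (2 * a) ≤ c * (a + 1) / 2 := by
      rw [div_le_div_iff₀ (by positivity) (by norm_num)]
      nlinarith
    have k2 : c * (b - 1) / 2 ≤ l₂ / (2 * b) := by
      rw [div_le_div_iff₀ (by norm_num) (by positivity)]
      nlinarith
    nlinarith
  · subst heq
    have : l₁ / (2 * b) ≤ l₂ / (2 * b) := by gcongr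
    linarith
  · exfalso
    have hba : b + 1 ≤ a := by
      rw [ha, hb]; push_cast; exact_mod_cast Nat.succ_le_of_lt hgt
    nlinarith
end

section
/- Suppose n = N(c,l) ≥ 2, so that n(n-1)c ≤ l < n(n+1)c. Let l' = (n-1)l/n - (n-1)c. Then (n-1)(n-2)c ≤ l' < (n-1)nc, hence N(c,l') = n-1, and φ(l') = φ(l) + c. -/
/-- if `n = N(c,l) ≥ 2` (so `n(n-1)c ≤ l < n(n+1)c`) and
`l' = (n-1)l/n - (n-1)c`, then `(n-1)(n-2)c ≤ l' < (n-1)nc`, hence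
`N(c,l') = n - 1`, and `φ(l') = φ(l) + c`. -/
theorem window_step (c l l' : ℝ) (n : ℕ)
    (hc : 0 < c) (hc1 : c ≤ 1) (hl1 : l ≤ 1) (hn : 2 ≤ n)
    (hl_lo : (n : ℝ) * ((n : ℝ) - 1) * c ≤ l)
    (hl_hi : l < (n : ℝ) * ((n : ℝ) + 1) * c)
    (hl' : l' = ((n : ℝ) - 1) * l / (n : ℝ) - ((n : ℝ) - 1) * c) :
    ((n : ℝ) - 1) * ((n : ℝ) - 2) * c ≤ l' ∧ l' < ((n : ℝ) - 1) * (n : ℝ) * c ∧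
      Ncase c l' (n - 1) ∧ phi c l' (n - 1) = phi c l n + c := by
  have hn1 : 1 ≤ n := le_trans (by norm_num) hn
  have hnR : (2:ℝ) ≤ (n:ℝ) := by exact_mod_cast hn
  have hnpos : (0:ℝ) < (n:ℝ) := by linarith
  have hne : (n:ℝ) ≠ 0 := ne_of_gt hnpos
  have hcast : ((n - 1 : ℕ) : ℝ) = (n:ℝ) - 1 := by
    push_cast [Nat.cast_sub hn1]; ring
  have key : l' * (n:ℝ) = ((n:ℝ) - 1) * l - ((n:ℝ) - 1) * c * (n:ℝ) := by
    rw [hl']; field_simp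
  have h1 : ((n : ℝ) - 1) * ((n : ℝ) - 2) * c ≤ l' := by
    nlinarith [mul_le_mul_of_nonneg_left hl_lo (by linarith : (0:ℝ) ≤ (n:ℝ) - 1)]
  have h2 : l' < ((n : ℝ) - 1) * (n : ℝ) * c := by
    nlinarith [mul_lt_mul_of_pos_left hl_hi (by linarith : (0:ℝ) < (n:ℝ) - 1)]
  refine ⟨h1, h2, ?_, ?_⟩
  · rcases eq_or_lt_of_le hn with h2n | h3n
    · -- n = 2, so n - 1 = 1
      subst h2n
      simp only [Ncase]
      norm_num
      have hl2 : l' = l / 2 - c := by rw [hl']; norm_num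
      constructor
      · norm_num at h2 ⊢; linarith
      · rw [hl2]; nlinarith
    · have h3 : 3 ≤ n := h3n
      have hm : n - 1 ≠ 0 := by omega
      have hm1 : n - 1 ≠ 1 := by omega
      have h3R : (3:ℝ) ≤ (n:ℝ) := by exact_mod_cast h3
      simp only [Ncase, if_neg hm, if_neg hm1, hcast]
      constructor
      · rw [div_lt_iff₀ (by nlinarith)]
        calc l' < ((n:ℝ) - 1) * (n:ℝ) * c := h2
        _ = c * (((n:ℝ) - 1) * (((n:ℝ) - 1) + 1)) := by ring
      · rw [le_div_iff₀ (by nlinarith)]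
        calc c * (((n:ℝ) - 1) * (((n:ℝ) - 1) - 1)) = ((n:ℝ) - 1) * ((n:ℝ) - 2) * c := by ring
        _ ≤ l' := h1
  · simp only [phi, hcast]
    rw [hl']
    have hne1 : (n:ℝ) - 1 ≠ 0 := by linarith
    field_simp
    ring
end

section
/- Two-period optimal guarantee: let c ∈ (1/4, 1/2) and x₀ = 1/4 + c/2. For any 1-Lipschitz q : [0,1] → ℝ attaining 1, the policy that searches x₀, stops with payoff q(x₀) - c if q(x₀) ≥ 3/4 - c/2, and otherwise searches the midpoint m of the remaining search window [x₀ + 1 - q(x₀), 1] and stops with payoff max(q(x₀), q(m)) - 2c, yields payoff at least 3/4 - (3/2)c. -/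
/-- two-period optimal guarantee: let `c ∈ (1/4, 1/2)` and
`x₀ = 1/4 + c/2`. For any 1-Lipschitz `q : [0,1] → ℝ` attaining the value 1:
if `q(x₀) ≥ 3/4 - c/2` the policy stops with payoff `q(x₀) - c`, and otherwise
it searches the midpoint `m` of the remaining window `[x₀ + 1 - q(x₀), 1]` and
stops with payoff `max(q(x₀), q(m)) - 2c`; in either case the payoff is at
least `3/4 - (3/2)c`. -/
theorem two_period_optimal_guarantee (c : ℝ) (q : ℝ → ℝ) (x₀ : ℝ)
    (hc : c ∈ Set.Ioo (1/4 : ℝ) (1/2)) (hx₀ : x₀ = 1/4 + c/2)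
    (hq : LipschitzOnWith 1 q (Set.Icc 0 1))
    (hattain : ∃ y ∈ Set.Icc (0:ℝ) 1, q y = 1) :
    (3/4 - c/2 ≤ q x₀ → 3/4 - (3/2) * c ≤ q x₀ - c) ∧
      (q x₀ < 3/4 - c/2 →
        3/4 - (3/2) * c ≤ max (q x₀) (q ((x₀ + 1 - q x₀ + 1) / 2)) - 2 * c) := by
  obtain ⟨hc1, hc2⟩ := hc
  obtain ⟨y, hy, hqy⟩ := hattain
  obtain ⟨hy0, hy1⟩ := hy
  have hx01 : x₀ ∈ Set.Icc (0:ℝ) 1 := by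
    constructor <;> [skip; skip] <;> rw [hx₀] <;> linarith
  have hdist : dist (q y) (q x₀) ≤ 1 * dist y x₀ := by
    simpa using hq.dist_le_mul y ⟨hy0, hy1⟩ x₀ hx01
  rw [Real.dist_eq, Real.dist_eq, one_mul, hqy] at hdist
  have h1 : 1 - q x₀ ≤ |y - x₀| := by
    calc 1 - q x₀ ≤ |1 - q x₀| := le_abs_self _
    _ ≤ |y - x₀| := hdist
  constructor
  · intro h; linarith
  · intro h
    -- y must be in the right window
    have hyL : x₀ + 1 - q x₀ ≤ y := by
      rcases abs_cases (y - x₀) with ⟨he, _⟩ | ⟨he, _⟩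
      · linarith [he ▸ h1]
      · rw [he] at h1
        -- y ≤ x₀ - (1 - q x₀) < 0, contradiction with y ≥ 0
        exfalso
        have : q x₀ ≥ 1 - (x₀ - y) := by linarith
        rw [hx₀] at h this
        linarith
    set m := (x₀ + 1 - q x₀ + 1) / 2 with hm
    have hm01 : m ∈ Set.Icc (0:ℝ) 1 := by
      constructor
      · rw [hm]; linarith [hx01.1]
      · rw [hm]; linarith
    have hdist2 : |q y - q m| ≤ |y - m| := by
      have := hq.dist_le_mul y ⟨hy0, hy1⟩ m hm01
      simpa [Real.dist_eq] using this
    have hym : |y - m| ≤ (1 - (x₀ + 1 - q x₀)) / 2 := by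
      rw [abs_le]
      constructor <;> rw [hm] <;> linarith
    have hqm : q m ≥ 1 - (q x₀ - x₀) / 2 := by
      have := (abs_le.mp hdist2).2
      rw [hqy] at this
      linarith [hym, (abs_le.mp hdist2).1]
    have : q x₀ - x₀ < 1/2 - c := by rw [hx₀] at h ⊢; linarith
    have : q m ≥ 3/4 + c/2 := by linarith
    calc 3/4 - (3/2) * c ≤ q m - 2 * c := by linarith
    _ ≤ max (q x₀) (q m) - 2 * c := by
        have := le_max_right (q x₀) (q m); linarith
end

section
/- Window-length contraction along the left-to-right policy: suppose n = N(c,l) ≥ 2 (so n(n-1)c ≤ l < n(n+1)c), the current window is [1-l, 1], the search point is x = 1 - l + 1 - φ(l), and the observed quality is z < φ(l). Then the new window is [x + 1 - z, 1] with length l' = z - x < (n-1)(l - nc)/n < n(n-1)c, hence N(c,l') ≤ n - 1. -/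
/-- window-length contraction along the left-to-right policy:
suppose `n = N(c,l) ≥ 2` (so `n(n-1)c ≤ l < n(n+1)c`), the current window is
`[1-l, 1]`, the search point is `x = 1 - l + 1 - φ(l)` with
`φ(l) = 1 - l/(2n) - (n-1)c/2`, and the observed quality is `z < φ(l)`.
Then the new window is `[x + 1 - z, 1]`, and its length `l' = z - x` satisfies
`l' < (n-1)(l - nc)/n < n(n-1)c`, hence `N(c,l') ≤ n - 1`. -/
theorem window_contraction (c l φ x z : ℝ) (n : ℕ)
    (hc : 0 < c) (hn : 2 ≤ n)
    (hl_lo : (n : ℝ) * ((n : ℝ) - 1) * c ≤ l)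
    (hl_hi : l < (n : ℝ) * ((n : ℝ) + 1) * c) (hl1 : l ≤ 1)
    (hφ : φ = 1 - l / (2 * (n : ℝ)) - ((n : ℝ) - 1) * c / 2)
    (hx : x = 1 - l + 1 - φ) (hz : z < φ) :
    Set.Icc (1 - l) 1 \ Set.Ioo (x - (1 - z)) (x + (1 - z)) =
        Set.Icc (x + 1 - z) 1 ∧
      z - x < ((n : ℝ) - 1) * (l - (n : ℝ) * c) / (n : ℝ) ∧
      ((n : ℝ) - 1) * (l - (n : ℝ) * c) / (n : ℝ) < (n : ℝ) * ((n : ℝ) - 1) * c ∧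
      ∀ m : ℕ, Ncase c (z - x) m → m ≤ n - 1 := by
  have hn' : (2:ℝ) ≤ (n:ℝ) := by exact_mod_cast hn
  have hnpos : (0:ℝ) < n := by linarith
  have hl0 : 0 < l := lt_of_lt_of_le (by nlinarith) hl_lo
  have hφ1 : φ ≤ 1 := by
    rw [hφ]
    have h1 : 0 ≤ l / (2*(n:ℝ)) := by positivity
    nlinarith
  -- key algebraic identity: 2φ - 2 + l = (n-1)(l-nc)/n
  have hkey : 2*φ - 2 + l = ((n:ℝ)-1)*(l - (n:ℝ)*c)/(n:ℝ) := by
    rw [hφ]; field_simp; ring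
  have h2 : z - x < ((n:ℝ)-1)*(l - (n:ℝ)*c)/(n:ℝ) := by
    rw [hx]; linarith [hkey]
  have h3 : ((n:ℝ)-1)*(l - (n:ℝ)*c)/(n:ℝ) < (n:ℝ)*((n:ℝ)-1)*c := by
    rw [div_lt_iff₀ hnpos]; nlinarith
  have hset : Set.Icc (1 - l) 1 \ Set.Ioo (x - (1 - z)) (x + (1 - z)) =
      Set.Icc (x + 1 - z) 1 := by
    have ha : x - (1 - z) < 1 - l := by rw [hx]; linarith
    have hb : 1 - l < x + 1 - z := by rw [hx]; linarith
    ext t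
    simp only [Set.mem_diff, Set.mem_Icc, Set.mem_Ioo, not_and, not_lt]
    constructor
    · rintro ⟨⟨h1, h2⟩, h3⟩
      refine ⟨?_, h2⟩
      by_contra hlt
      push_neg at hlt
      have := h3 (by linarith)
      linarith
    · rintro ⟨h1, h2⟩
      exact ⟨⟨by linarith, h2⟩, fun h => by linarith⟩
  refine ⟨hset, h2, h3, ?_⟩
  intro m hm
  by_contra hmn
  push_neg at hmn
  have hmn' : n ≤ m := by omega
  have hm2 : m ≠ 0 ∧ m ≠ 1 := by omega
  simp only [Ncase, if_neg hm2.1, if_neg hm2.2] at hm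
  have hmr : (n:ℝ) ≤ (m:ℝ) := by exact_mod_cast hmn'
  have hmpos : (0:ℝ) < (m:ℝ)*((m:ℝ)-1) := by nlinarith
  have := hm.2
  rw [le_div_iff₀ hmpos] at this
  have hzx : z - x < (n:ℝ)*((n:ℝ)-1)*c := lt_trans h2 h3
  have hle : (n:ℝ)*((n:ℝ)-1) ≤ (m:ℝ)*((m:ℝ)-1) := by nlinarith
  nlinarith [mul_le_mul_of_nonneg_right hle hc.le]
end
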